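/- For every integer $q \ge 2$, $\sum_{r=1}^{q-1} ((r-1)!)^2 \binom{q-1}{r-1}^4 (2q-2r)! \le ((q-1)!)^2\, 3^{2q-2}$. -/

import Mathlib

/-!
Put `N = q - 1` and `i = r - 1`. Since `N! = C(N,i) i! (N-i)!` and `(2m)! = C(2m,m) (m!)² ≤ 4^m (m!)²`,
the `i`-th term is at most `(N! C(N,i) 2^(N-i))²`. A sum of squares of naturals is at most the square
of the sum, and `∑ᵢ C(N,i) 2^(N-i) = 3^N` by the binomial theorem.
-/

open Finset Nat

theorem factorial_two_mul_le_sq (m : ℕ) : (2 * m)! ≤ (2 ^ m * m !) ^ 2 := by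
  have h := choose_mul_factorial_mul_factorial (show m ≤ 2 * m by omega)
  rw [show 2 * m - m = m by omega, ← centralBinom_eq_two_mul_choose] at h
  have h4 : centralBinom m ≤ (2 ^ m) ^ 2 := by
    rw [← pow_mul, mul_comm, pow_mul]; exact centralBinom_le_four_pow m
  calc (2 * m)! = centralBinom m * m ! ^ 2 := by rw [← h]; ring
    _ ≤ (2 ^ m) ^ 2 * m ! ^ 2 := by gcongr
    _ = (2 ^ m * m !) ^ 2 := by ring

theorem factorial_sq_mul_choose_pow_four_mul_factorial_le {N i : ℕ} (hi : i ≤ N) :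
    i ! ^ 2 * N.choose i ^ 4 * (2 * (N - i))! ≤ (N ! * (N.choose i * 2 ^ (N - i))) ^ 2 :=
  calc i ! ^ 2 * N.choose i ^ 4 * (2 * (N - i))!
      ≤ i ! ^ 2 * N.choose i ^ 4 * (2 ^ (N - i) * (N - i)!) ^ 2 := by
        gcongr; exact factorial_two_mul_le_sq _
    _ = (N ! * (N.choose i * 2 ^ (N - i))) ^ 2 := by
        rw [← choose_mul_factorial_mul_factorial hi]; ring

theorem sum_range_choose_mul_two_pow (N : ℕ) :
    ∑ i ∈ range (N + 1), N.choose i * 2 ^ (N - i) = 3 ^ N := by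
  rw [show (3 : ℕ) = 1 + 2 by rfl, add_pow]
  simp only [one_pow, one_mul, Nat.cast_id, mul_comm]

theorem sum_range_factorial_sq_mul_choose_pow_four_mul_factorial_le (N : ℕ) :
    ∑ i ∈ range (N + 1), i ! ^ 2 * N.choose i ^ 4 * (2 * (N - i))! ≤ (N ! * 3 ^ N) ^ 2 :=
  calc ∑ i ∈ range (N + 1), i ! ^ 2 * N.choose i ^ 4 * (2 * (N - i))!
      ≤ ∑ i ∈ range (N + 1), (N ! * (N.choose i * 2 ^ (N - i))) ^ 2 :=
        sum_le_sum fun i hi ↦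
          factorial_sq_mul_choose_pow_four_mul_factorial_le (Nat.lt_succ_iff.1 (mem_range.1 hi))
    _ ≤ (∑ i ∈ range (N + 1), N ! * (N.choose i * 2 ^ (N - i))) ^ 2 :=
        sum_sq_le_sq_sum_of_nonneg fun _ _ ↦ Nat.zero_le _
    _ = (N ! * 3 ^ N) ^ 2 := by rw [← mul_sum, sum_range_choose_mul_two_pow]

theorem stmt_3_general (q : ℕ) :
    ∑ r ∈ Finset.Icc 1 (q - 1),
        ((r - 1).factorial) ^ 2 * (Nat.choose (q - 1) (r - 1)) ^ 4 * (2 * q - 2 * r).factorial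
      ≤ ((q - 1).factorial) ^ 2 * 3 ^ (2 * q - 2) := by
  set N := q - 1 with hN
  have reindex : ∑ r ∈ Icc 1 N, (r - 1)! ^ 2 * N.choose (r - 1) ^ 4 * (2 * q - 2 * r)!
      = ∑ i ∈ range N, i ! ^ 2 * N.choose i ^ 4 * (2 * (N - i))! := by
    rw [← Ico_add_one_right_eq_Icc, sum_Ico_eq_sum_range, Nat.add_sub_cancel]
    refine sum_congr rfl fun i hi ↦ ?_
    rw [show 1 + i - 1 = i by omega, show 2 * q - 2 * (1 + i) = 2 * (N - i) by omega]
  calc _ = ∑ i ∈ range N, i ! ^ 2 * N.choose i ^ 4 * (2 * (N - i))! := reindex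
    _ ≤ ∑ i ∈ range (N + 1), i ! ^ 2 * N.choose i ^ 4 * (2 * (N - i))! :=
        sum_le_sum_of_subset (range_subset_range.2 (Nat.le_succ N))
    _ ≤ (N ! * 3 ^ N) ^ 2 := sum_range_factorial_sq_mul_choose_pow_four_mul_factorial_le N
    _ = N ! ^ 2 * 3 ^ (2 * q - 2) := by rw [show 2 * q - 2 = N * 2 by omega, pow_mul]; ring

/-- For every integer `q ≥ 2`,
`∑_{r=1}^{q-1} ((r-1)!)² C(q-1,r-1)⁴ (2q-2r)! ≤ ((q-1)!)² 3^{2q-2}`. -/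
theorem stmt_3 (q : ℕ) (hq : 2 ≤ q) :
    ∑ r ∈ Finset.Icc 1 (q - 1),
        ((r - 1).factorial) ^ 2 * (Nat.choose (q - 1) (r - 1)) ^ 4 * (2 * q - 2 * r).factorial
      ≤ ((q - 1).factorial) ^ 2 * 3 ^ (2 * q - 2) :=
  stmt_3_general q
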